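/- Let H be an N×N complex Hermitian matrix with H² = H, let |ψ0⟩ ∈ ℂ^N be a unit vector, ψ0 = |ψ0⟩⟨ψ0|, X0 := [H, ψ0], Y0 := i[H, X0]. Fix x, y ∈ ℝ. Then for every unitary U, the curve γ(t) := e^{i(π/2)H} e^{−i t((x+y)/2) ψ0} e^{−iπH} e^{i t((x−y)/2) ψ0} e^{i(π/2)H} e^{i t y ψ0} U (t ≥ 0) satisfies γ(0) = U, and γ is differentiable at t = 0 with γ′(0) = (x X0 + y Y0) U. (This is the 6-factor Grover-compatible retraction.) -/

import Mathlib

open Matrix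

attribute [local instance] Matrix.frobeniusNormedAddCommGroup Matrix.frobeniusNormedSpace

/-- The rank-one projector `|ψ⟩⟨ψ|` associated with a vector `ψ`. -/
noncomputable def rankOneProj {N : ℕ} (ψ : Fin N → ℂ) : Matrix (Fin N) (Fin N) ℂ :=
  Matrix.vecMulVec ψ (star ψ)

/-- The gate `e^{iθM}` for a matrix `M` and a real angle `θ`. -/
noncomputable def expGate {N : ℕ} (M : Matrix (Fin N) (Fin N) ℂ) (θ : ℝ) :
    Matrix (Fin N) (Fin N) ℂ :=
  NormedSpace.exp ((Complex.I * (θ : ℂ)) • M)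

/-!
For an idempotent `H` one has `e^{iθH} = (1 - H) + e^{iθ} H`, and the three `H`-gates have angles
summing to `0`, so they multiply to `1` and `γ 0 = U`. By the product rule, each `ψ₀`-gate
contributes its generator conjugated by the `H`-gates around it, which reduce to
`e^{±iπH/2} = (1 - H) ± iH`; expanding these conjugations yields `x [H, ψ₀] + y i[H, [H, ψ₀]]`.
-/

open NormedSpace

theorem exp_smul_of_isIdempotentElem {𝔸 : Type*} [Ring 𝔸] [Algebra ℂ 𝔸] [TopologicalSpace 𝔸]
    [IsTopologicalRing 𝔸] [T2Space 𝔸] [ContinuousSMul ℂ 𝔸] {e : 𝔸} (he : IsIdempotentElem e)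
    (c : ℂ) : exp (c • e) = (1 - e) + Complex.exp c • e := by
  have hpow : ∀ n : ℕ, (c • e) ^ n = c ^ n • e + if n = 0 then 1 - e else 0 := by
    rintro (_ | n)
    · simp
    · simp [smul_pow, he.pow_succ_eq]
  have hsum : HasSum (fun n : ℕ => (n.factorial⁻¹ : ℂ) • (c • e) ^ n)
      (Complex.exp c • e + (1 - e)) := by
    simp only [hpow, smul_add, smul_smul, smul_ite, smul_zero]
    refine HasSum.add ?_ ?_
    · rw [Complex.exp_eq_exp_ℂ]
      exact (exp_series_hasSum_exp' (𝕂 := ℂ) c).smul_const e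
    · convert hasSum_ite_eq 0 (1 - e) using 2 with n
      split_ifs <;> simp_all
  rw [exp_eq_tsum ℂ, add_comm]
  exact hsum.tsum_eq

section Gates

attribute [local instance] Matrix.frobeniusNormedRing Matrix.frobeniusNormedAlgebra

variable {N : ℕ}

theorem expGate_zero (M : Matrix (Fin N) (Fin N) ℂ) : expGate M 0 = 1 := by
  simp [expGate]

theorem expGate_add (M : Matrix (Fin N) (Fin N) ℂ) (s t : ℝ) :
    expGate M (s + t) = expGate M s * expGate M t := by
  rw [expGate, expGate, expGate, ← Matrix.exp_add_of_commute _ _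
    (((Commute.refl M).smul_left _).smul_right _), ← add_smul]
  push_cast
  ring_nf

theorem expGate_of_isIdempotentElem {H : Matrix (Fin N) (Fin N) ℂ} (hH : IsIdempotentElem H)
    (θ : ℝ) : expGate H θ = (1 - H) + Complex.exp (Complex.I * θ) • H :=
  exp_smul_of_isIdempotentElem hH _

theorem hasDerivAt_expGate_mul_const (M : Matrix (Fin N) (Fin N) ℂ) (c t : ℝ) :
    HasDerivAt (fun s : ℝ => expGate M (s * c))
      (expGate M (t * c) * (Complex.I * c) • M) t := by
  have harg : ∀ s : ℝ, (Complex.I * ((s * c : ℝ) : ℂ)) • M = s • (Complex.I * (c : ℂ)) • M := by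
    intro s
    rw [← smul_assoc, Complex.real_smul]
    push_cast
    ring_nf
  simp only [expGate, harg]
  exact hasDerivAt_exp_smul_const (𝕂 := ℝ) ((Complex.I * (c : ℂ)) • M) t

theorem hasDerivAt_interleaved_expGate_product (P A B C U : Matrix (Fin N) (Fin N) ℂ) (a b c : ℝ) :
    HasDerivAt
      (fun t : ℝ => A * expGate P (t * a) * B * expGate P (t * b) * C * expGate P (t * c) * U)
      (((Complex.I * a) • (A * P * (B * C)) + (Complex.I * b) • (A * B * P * C) +
        (Complex.I * c) • (A * B * C * P)) * U) 0 := by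
  have hgate : ∀ d : ℝ, HasDerivAt (fun t : ℝ => expGate P (t * d)) ((Complex.I * d) • P) 0 := by
    intro d
    simpa only [zero_mul, expGate_zero, one_mul] using hasDerivAt_expGate_mul_const P d 0
  refine (((((((hgate a).const_mul A).mul_const B).mul (hgate b)).mul_const C).mul
    (hgate c)).mul_const U).congr_deriv ?_
  simp only [Pi.mul_apply, zero_mul, expGate_zero, mul_one, one_mul, add_mul, smul_mul_assoc,
    mul_smul_comm, mul_assoc]

theorem expGate_pi_div_two {H : Matrix (Fin N) (Fin N) ℂ} (hH : IsIdempotentElem H) :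
    expGate H (Real.pi / 2) = (1 - H) + Complex.I • H := by
  rw [expGate_of_isIdempotentElem hH, mul_comm]
  push_cast
  rw [Complex.exp_pi_div_two_mul_I]

theorem expGate_neg_pi_div_two {H : Matrix (Fin N) (Fin N) ℂ} (hH : IsIdempotentElem H) :
    expGate H (-(Real.pi / 2)) = (1 - H) - Complex.I • H := by
  rw [expGate_of_isIdempotentElem hH, mul_comm]
  push_cast
  rw [← neg_div, Complex.exp_neg_pi_div_two_mul_I, neg_smul, ← sub_eq_add_neg]

theorem sum_conj_expGate_pi_div_two {H : Matrix (Fin N) (Fin N) ℂ} (hH : IsIdempotentElem H)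
    (P : Matrix (Fin N) (Fin N) ℂ) (x y : ℝ) :
    (Complex.I * ↑(-((x + y) / 2))) • (expGate H (Real.pi / 2) * P * expGate H (-(Real.pi / 2))) +
      (Complex.I * ↑((x - y) / 2)) • (expGate H (-(Real.pi / 2)) * P * expGate H (Real.pi / 2)) +
      (Complex.I * y) • P =
    (x : ℂ) • (H * P - P * H) +
      (y : ℂ) • (Complex.I • (H * (H * P - P * H) - (H * P - P * H) * H)) := by
  have hH' : ∀ A : Matrix (Fin N) (Fin N) ℂ, H * (H * A) = H * A := fun A => by
    rw [← mul_assoc, hH.eq]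
  rw [expGate_pi_div_two hH, expGate_neg_pi_div_two hH]
  simp only [mul_add, add_mul, mul_sub, sub_mul, smul_mul_assoc, mul_smul_comm, smul_smul,
    smul_sub, smul_add, mul_one, one_mul, mul_assoc, hH.eq, hH']
  match_scalars <;> (apply Complex.ext <;> simp <;> ring)

end Gates

theorem stmt_9_general {N : ℕ} (H : Matrix (Fin N) (Fin N) ℂ)
    (hProj : H * H = H)
    (ψ₀ : Fin N → ℂ)
    (X₀ Y₀ : Matrix (Fin N) (Fin N) ℂ)
    (hX₀ : X₀ = H * rankOneProj ψ₀ - rankOneProj ψ₀ * H)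
    (hY₀ : Y₀ = Complex.I • (H * X₀ - X₀ * H))
    (x y : ℝ)
    (U : Matrix (Fin N) (Fin N) ℂ)
    (γ : ℝ → Matrix (Fin N) (Fin N) ℂ)
    (hγ : γ = fun t =>
      expGate H (Real.pi / 2) * expGate (rankOneProj ψ₀) (-(t * ((x + y) / 2))) *
        expGate H (-Real.pi) * expGate (rankOneProj ψ₀) (t * ((x - y) / 2)) *
        expGate H (Real.pi / 2) * expGate (rankOneProj ψ₀) (t * y) * U) :
    γ 0 = U ∧
    HasDerivWithinAt γ (((x : ℂ) • X₀ + (y : ℂ) • Y₀) * U) (Set.Ici (0 : ℝ)) 0 := by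
  have hAB : expGate H (Real.pi / 2) * expGate H (-Real.pi) = expGate H (-(Real.pi / 2)) := by
    rw [← expGate_add]; ring_nf
  have hBA : expGate H (-Real.pi) * expGate H (Real.pi / 2) = expGate H (-(Real.pi / 2)) := by
    rw [← expGate_add]; ring_nf
  have hABA : expGate H (Real.pi / 2) * expGate H (-Real.pi) * expGate H (Real.pi / 2) = 1 := by
    rw [← expGate_add, ← expGate_add, ← expGate_zero H]; ring_nf
  simp only [← mul_neg] at hγ
  subst hγ
  constructor
  · simp only [zero_mul, expGate_zero, mul_one, hABA, one_mul]
  · have hderiv := hasDerivAt_interleaved_expGate_product (rankOneProj ψ₀) (expGate H (Real.pi / 2))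
      (expGate H (-Real.pi)) (expGate H (Real.pi / 2)) U (-((x + y) / 2)) ((x - y) / 2) y
    rw [hABA, hAB, hBA, one_mul, sum_conj_expGate_pi_div_two hProj, ← hX₀, ← hY₀] at hderiv
    exact hderiv.hasDerivWithinAt

theorem stmt_9 {N : ℕ} (H : Matrix (Fin N) (Fin N) ℂ)
    (hHerm : H.IsHermitian) (hProj : H * H = H)
    (ψ₀ : Fin N → ℂ) (hψ₀ : star ψ₀ ⬝ᵥ ψ₀ = 1)
    (X₀ Y₀ : Matrix (Fin N) (Fin N) ℂ)
    (hX₀ : X₀ = H * rankOneProj ψ₀ - rankOneProj ψ₀ * H)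
    (hY₀ : Y₀ = Complex.I • (H * X₀ - X₀ * H))
    (x y : ℝ)
    (U : Matrix (Fin N) (Fin N) ℂ) (hU : U ∈ Matrix.unitaryGroup (Fin N) ℂ)
    (γ : ℝ → Matrix (Fin N) (Fin N) ℂ)
    (hγ : γ = fun t =>
      expGate H (Real.pi / 2) * expGate (rankOneProj ψ₀) (-(t * ((x + y) / 2))) *
        expGate H (-Real.pi) * expGate (rankOneProj ψ₀) (t * ((x - y) / 2)) *
        expGate H (Real.pi / 2) * expGate (rankOneProj ψ₀) (t * y) * U) :
    γ 0 = U ∧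
    HasDerivWithinAt γ (((x : ℂ) • X₀ + (y : ℂ) • Y₀) * U) (Set.Ici (0 : ℝ)) 0 :=
  stmt_9_general H hProj ψ₀ X₀ Y₀ hX₀ hY₀ x y U γ hγ
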